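/- arXiv:math/0301286 — 4 statements merged into one kernel-verified Lean document; each statement's English description precedes it below -/
import Mathlib

section
/- For the scalar ODE u' = a + ε p(u) with a > -εm, the limit μ = lim_{t→∞} u(t)/t exists, is independent of the initial condition, and equals L/T where T = ∫₀^L du/(a + ε p(u)). -/
open Filter intervalIntegral

/-- If `a > -εm`, then for any solution of `u' = a + ε p(u)` (regardless of the
initial condition), `u(t)/t → L/T` where `T = ∫₀ᴸ du/(a + ε p(u))`. -/
theorem stmt_2 (L a ε : ℝ) (hL : 0 < L) (hε : 0 < ε)
    (p : ℝ → ℝ) (hp : Continuous p) (hper : ∀ x, p (x + L) = p x)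
    (m : ℝ) (hm : m = sInf (p '' Set.Ico 0 L)) (ha : -ε * m < a)
    (u : ℝ → ℝ) (hu : ∀ t, 0 ≤ t → HasDerivAt u (a + ε * p (u t)) t)
    (T : ℝ) (hT : T = ∫ x in (0:ℝ)..L, (a + ε * p x)⁻¹) :
    Tendsto (fun t => u t / t) atTop (nhds (L / T)) := by
  have hperiodic : Function.Periodic p L := hper
  -- p is bounded below by m
  have hbdd : BddBelow (p '' Set.Ico 0 L) := by
    have := (isCompact_Icc (a := (0:ℝ)) (b := L)).bddBelow_image hp.continuousOn
    exact this.mono (Set.image_mono Set.Ico_subset_Icc_self)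
  have hmle : ∀ x, m ≤ p x := by
    intro x
    obtain ⟨y, hy, hxy⟩ := hperiodic.exists_mem_Ico₀ hL x
    rw [hxy, hm]
    exact csInf_le hbdd ⟨y, hy, rfl⟩
  have hpos : ∀ x, 0 < a + ε * p x := by
    intro x
    have h1 : ε * m ≤ ε * p x := mul_le_mul_of_nonneg_left (hmle x) hε.le
    linarith
  set g : ℝ → ℝ := fun x => (a + ε * p x)⁻¹ with hg_def
  have hgc : Continuous g := by
    apply Continuous.inv₀ (by continuity)
    intro x; exact (hpos x).ne'
  have hgpos : ∀ x, 0 < g x := fun x => inv_pos.2 (hpos x)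
  have hgper : Function.Periodic g L := fun x => by simp [hg_def, hper x]
  have hgint : ∀ t₁ t₂ : ℝ, IntervalIntegrable g MeasureTheory.volume t₁ t₂ :=
    fun t₁ t₂ => hgc.intervalIntegrable t₁ t₂
  set F : ℝ → ℝ := fun x => ∫ s in (0:ℝ)..x, g s with hF_def
  have hF : ∀ x, HasDerivAt F (g x) x := fun x =>
    (hgc.integral_hasStrictDerivAt 0 x).hasDerivAt
  have hTpos : 0 < T := by
    rw [hT]
    exact intervalIntegral.intervalIntegral_pos_of_pos (hgc.intervalIntegrable 0 L)
      (fun x => hgpos x) hL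
  -- F (u t) = t + F (u 0) for t ≥ 0
  have key : ∀ t, 0 ≤ t → F (u t) = t + F (u 0) := by
    intro t ht
    set h : ℝ → ℝ := fun s => F (u s) - s with hh_def
    have hderiv : ∀ s, 0 ≤ s → HasDerivAt h 0 s := by
      intro s hs
      have h1 : HasDerivAt (fun s => F (u s)) (g (u s) * (a + ε * p (u s))) s :=
        (hF (u s)).comp s (hu s hs)
      have h2 : g (u s) * (a + ε * p (u s)) = 1 := inv_mul_cancel₀ (hpos (u s)).ne'
      rw [h2] at h1
      exact (h1.sub (hasDerivAt_id' s)).congr_deriv (sub_self 1)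
    have := constant_of_has_deriv_right_zero
      (f := h) (a := 0) (b := t)
      (fun s hs => (hderiv s hs.1).continuousAt.continuousWithinAt)
      (fun s hs => (hderiv s hs.1).hasDerivWithinAt)
      t (Set.mem_Icc.2 ⟨ht, le_refl t⟩)
    have : F (u t) - t = F (u 0) - 0 := this
    linarith
  -- φ := F - (T/L)·id is periodic and bounded
  set φ : ℝ → ℝ := fun x => F x - T / L * x with hφ_def
  have hφper : Function.Periodic φ L := by
    intro x
    have hFadd : F (x + L) = F x + T := by
      have := hgper.intervalIntegral_add_eq_add 0 x hgint
      simp only [hF_def, hg_def]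
      rw [this, hT]
      simp
      rfl
    simp only [hφ_def, hFadd]
    field_simp
    ring
  have hφcont : Continuous φ := by
    have hFc : Continuous F := continuous_iff_continuousAt.2 fun x => (hF x).continuousAt
    exact hFc.sub (continuous_const.mul continuous_id)
  obtain ⟨C, hC⟩ : ∃ C, ∀ x, |φ x| ≤ C := by
    obtain ⟨C, hC⟩ := (isCompact_Icc (a := (0:ℝ)) (b := L)).exists_bound_of_continuousOn
      hφcont.continuousOn
    refine ⟨C, fun x => ?_⟩
    obtain ⟨y, hy, hxy⟩ := hφper.exists_mem_Ico₀ hL x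
    rw [hxy]
    simpa using hC y (Set.Ico_subset_Icc_self hy)
  -- conclusion
  have hmain : ∀ t, 0 ≤ t → u t = L / T * (t + F (u 0) - φ (u t)) := by
    intro t ht
    have h1 : φ (u t) = F (u t) - T / L * u t := rfl
    have h2 := key t ht
    have hT0 : T ≠ 0 := hTpos.ne'
    have hL0 : L ≠ 0 := hL.ne'
    field_simp
    rw [h1, h2]
    field_simp
    ring
  have hzero : Tendsto (fun t => (F (u 0) - φ (u t)) / t) atTop (nhds 0) := by
    refine squeeze_zero_norm' (a := fun t => (|F (u 0)| + C) / t) ?_ ?_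
    · filter_upwards [eventually_gt_atTop (0:ℝ)] with t ht
      rw [Real.norm_eq_abs, abs_div, abs_of_pos ht]
      gcongr
      calc |F (u 0) - φ (u t)| ≤ |F (u 0)| + |φ (u t)| := abs_sub _ _
        _ ≤ |F (u 0)| + C := by linarith [hC (u t)]
    · simpa [div_eq_mul_inv] using tendsto_inv_atTop_zero.const_mul (|F (u 0)| + C)
  have hfinal : Tendsto (fun t => L / T * (1 + (F (u 0) - φ (u t)) / t)) atTop
      (nhds (L / T)) := by
    have := ((tendsto_const_nhds (x := (1:ℝ)) (f := atTop)).add hzero).const_mul (L / T)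
    simpa using this
  apply hfinal.congr'
  filter_upwards [eventually_gt_atTop (0:ℝ)] with t ht
  have h := hmain t ht.le
  generalize hy : φ (u t) = y at h ⊢
  rw [h]
  field_simp
  ring
end

section
/- Suppose θ(t) solves θ' = ω + ε f(θ) with θ = v·1 + W u as above, and suppose μ = lim_{t→∞} u(t)/t exists. Then the solution is coherent (i.e., lim_{t→∞} θᵢ(t)/θⱼ(t) = 1 for all i, j) if and only if μ = 0, provided 1ᵀω ≠ 0. -/
open Matrix Filter Finset

private lemma div_div_aux (a b t : ℝ) (ht : t ≠ 0) : a / t / (b / t) = a / b := by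
  rcases eq_or_ne b 0 with hb | hb
  · simp [hb]
  · field_simp

/-- Coherence criterion: with `θ = v·1 + W u`, `v(t) = v(0) + (1ᵀω)t`,
`1ᵀω ≠ 0`, and `μ = lim u(t)/t` existing, the solution is coherent
(`θᵢ(t)/θⱼ(t) → 1` for all `i, j`) iff `μ = 0`. -/
theorem stmt_6 (N : ℕ) (hN : 2 ≤ N)
    (one : Fin N → ℝ) (hone : ∀ i, one i = 1 / Real.sqrt N)
    (ω : Fin N → ℝ) (hω : ∑ i, one i * ω i ≠ 0)
    (W : Matrix (Fin N) (Fin (N - 1)) ℝ)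
    (hWone : ∀ k, ∑ i, one i * W i k = 0)
    (hWorth : Wᵀ * W = 1)
    (v : ℝ → ℝ) (hv : ∀ t, v t = v 0 + (∑ i, one i * ω i) * t)
    (u : ℝ → Fin (N - 1) → ℝ)
    (θ : ℝ → Fin N → ℝ)
    (hθ : ∀ t i, θ t i = v t * one i + ∑ k, W i k * u t k)
    (μ : Fin (N - 1) → ℝ)
    (hμ : ∀ k, Tendsto (fun t => u t k / t) atTop (nhds (μ k))) :
    (∀ i j, Tendsto (fun t => θ t i / θ t j) atTop (nhds 1)) ↔ μ = 0 := by
  set c : ℝ := ∑ i, one i * ω i with hc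
  have hNpos : (0:ℝ) < N := by
    have : (2:ℝ) ≤ N := by exact_mod_cast hN
    linarith
  have hsqrt : Real.sqrt N ≠ 0 := by positivity
  have hone' : ∀ i, one i ≠ 0 := fun i => by rw [hone i]; positivity
  have honesq : ∀ i : Fin N, one i * one i = 1 / N := by
    intro i
    rw [hone i]
    rw [div_mul_div_comm, one_mul, Real.mul_self_sqrt hNpos.le]
  -- the limit of θ t i / t
  set L : Fin N → ℝ := fun i => c * one i + ∑ k, W i k * μ k with hLdef
  have hL : ∀ i, Tendsto (fun t => θ t i / t) atTop (nhds (L i)) := by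
    intro i
    have h1 : Tendsto (fun t : ℝ => v 0 * one i / t) atTop (nhds 0) :=
      Tendsto.div_atTop tendsto_const_nhds tendsto_id
    have h2 : Tendsto (fun t : ℝ => ∑ k, W i k * (u t k / t)) atTop
        (nhds (∑ k, W i k * μ k)) :=
      tendsto_finset_sum _ fun k _ => (hμ k).const_mul _
    have h3 : Tendsto (fun t : ℝ => v 0 * one i / t + c * one i + ∑ k, W i k * (u t k / t))
        atTop (nhds (0 + c * one i + ∑ k, W i k * μ k)) :=
      (h1.add tendsto_const_nhds).add h2
    rw [zero_add] at h3
    refine h3.congr' ?_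
    filter_upwards [eventually_gt_atTop (0:ℝ)] with t ht
    have ht' : t ≠ 0 := ne_of_gt ht
    have hsum : (∑ k, W i k * u t k) / t = ∑ k, W i k * (u t k / t) := by
      rw [Finset.sum_div]; exact Finset.sum_congr rfl fun k _ => mul_div_assoc _ _ _
    rw [hθ t i, hv t, add_div, hsum]
    congr 1
    field_simp
  have hsumL : ∑ i, one i * L i = c := by
    have e1 : ∑ i, one i * (c * one i) = c := by
      have : ∑ i, one i * (c * one i) = c * ∑ i, one i * one i := by
        rw [Finset.mul_sum]; apply Finset.sum_congr rfl; intro i _; ring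
      rw [this]
      have : ∑ i : Fin N, one i * one i = 1 := by
        rw [Finset.sum_congr rfl fun i _ => honesq i]
        simp [Finset.sum_const, Finset.card_univ]
        field_simp
      rw [this, mul_one]
    have e2 : ∑ i, one i * ∑ k, W i k * μ k = 0 := by
      have e3 : ∀ i : Fin N, one i * ∑ k, W i k * μ k = ∑ k, one i * W i k * μ k := by
        intro i; rw [Finset.mul_sum]; exact Finset.sum_congr rfl fun k _ => by ring
      rw [Finset.sum_congr rfl fun i _ => e3 i, Finset.sum_comm]
      refine Finset.sum_eq_zero fun k _ => ?_
      rw [← Finset.sum_mul, hWone k, zero_mul]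
    calc ∑ i, one i * L i
        = ∑ i, (one i * (c * one i) + one i * ∑ k, W i k * μ k) := by
          apply Finset.sum_congr rfl; intro i _; rw [hLdef]; ring
      _ = c := by rw [Finset.sum_add_distrib, e1, e2, add_zero]
  constructor
  · -- coherence → μ = 0
    intro h
    -- there is j₀ with L j₀ ≠ 0
    obtain ⟨j₀, hj₀⟩ : ∃ j₀, L j₀ ≠ 0 := by
      by_contra hcon
      push_neg at hcon
      apply hω
      rw [← hsumL]
      exact Finset.sum_eq_zero fun i _ => by rw [hcon i, mul_zero]
    -- all L i are equal to L j₀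
    have hLeq : ∀ i, L i = L j₀ := by
      intro i
      have hne : ∀ᶠ t in atTop, θ t j₀ ≠ 0 := by
        have := (hL j₀).eventually_ne hj₀
        filter_upwards [this] with t ht hzero
        exact ht (by rw [hzero, zero_div])
      have h4 : Tendsto (fun t => θ t i / θ t j₀ * (θ t j₀ / t)) atTop
          (nhds (1 * L j₀)) := (h i j₀).mul (hL j₀)
      rw [one_mul] at h4
      have h5 : Tendsto (fun t => θ t i / t) atTop (nhds (L j₀)) := by
        refine h4.congr' ?_
        filter_upwards [hne] with t ht
        field_simp
      exact tendsto_nhds_unique (hL i) h5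
    -- columns of W sum to zero
    have hWsum : ∀ k, ∑ i, W i k = 0 := by
      intro k
      have h0 := hWone k
      have : ∑ i, one i * W i k = (1 / Real.sqrt N) * ∑ i, W i k := by
        rw [Finset.mul_sum]
        exact Finset.sum_congr rfl fun i _ => by rw [hone i]
      rw [this] at h0
      have hne : (1 / Real.sqrt N : ℝ) ≠ 0 := by positivity
      exact (mul_eq_zero.mp h0).resolve_left hne
    -- W i k * (L i - c * one i) summed gives μ k
    funext k
    have hWμ : ∀ i, ∑ l, W i l * μ l = L i - c * one i := by
      intro i; rw [hLdef]; ring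
    have hkey : μ k = ∑ i, W i k * (∑ l, W i l * μ l) := by
      have horth : ∀ l, ∑ i, W i k * W i l = if k = l then (1:ℝ) else 0 := by
        intro l
        have h := congrFun (congrFun hWorth k) l
        simpa [Matrix.mul_apply, Matrix.one_apply, Matrix.transpose_apply] using h
      calc μ k = ∑ l, (if k = l then (1:ℝ) else 0) * μ l := by simp
        _ = ∑ l, (∑ i, W i k * W i l) * μ l := by
            exact Finset.sum_congr rfl fun l _ => by rw [horth l]
        _ = ∑ l, ∑ i, W i k * W i l * μ l := by
            exact Finset.sum_congr rfl fun l _ => by rw [Finset.sum_mul]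
        _ = ∑ i, ∑ l, W i k * W i l * μ l := Finset.sum_comm
        _ = ∑ i, W i k * (∑ l, W i l * μ l) := by
            refine Finset.sum_congr rfl fun i _ => ?_
            rw [Finset.mul_sum]
            exact Finset.sum_congr rfl fun l _ => by ring
    rw [hkey]
    have : ∀ i, W i k * (∑ l, W i l * μ l) = W i k * (L j₀ - c / Real.sqrt N) := by
      intro i
      rw [hWμ i, hLeq i, hone i]
      ring
    rw [Finset.sum_congr rfl fun i _ => this i, ← Finset.sum_mul, hWsum k, zero_mul]
    rfl
  · -- μ = 0 → coherence
    intro hμ0 i j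
    have hLval : ∀ i, L i = c / Real.sqrt N := by
      intro i
      rw [hLdef]
      simp only [hμ0, Pi.zero_apply, mul_zero, Finset.sum_const_zero, add_zero, hone i]
      ring
    have hLne : ∀ i, L i ≠ 0 := by
      intro i
      rw [hLval i]
      exact div_ne_zero hω hsqrt
    have h6 : Tendsto (fun t => (θ t i / t) / (θ t j / t)) atTop (nhds (L i / L j)) :=
      (hL i).div (hL j) (hLne j)
    have : L i / L j = 1 := by
      rw [hLval i, hLval j, div_self (div_ne_zero hω hsqrt)]
    rw [this] at h6
    refine h6.congr' ?_
    filter_upwards [eventually_gt_atTop (0:ℝ)] with t ht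
    exact div_div_aux _ _ _ (ne_of_gt ht)
end

section
/- For x ≥ 1, erf(x) ≥ 1 − 2e^{−x²}/(√π x + √(πx² + 4)) ≥ 1 − C₀ e^{−x²}, where C₀ = 2/(√π + √(π+4)). -/
open Real

/-- The error function `erf(x) = (2/√π) ∫₀ˣ e^{-t²} dt`. -/
noncomputable def erf (x : ℝ) : ℝ :=
  (2 / Real.sqrt π) * ∫ t in (0:ℝ)..x, Real.exp (-t ^ 2)



open Real Set MeasureTheory Filter

noncomputable def erfS (x : ℝ) : ℝ := Real.sqrt (x ^ 2 + 4 / π)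

noncomputable def erfH (x : ℝ) : ℝ := Real.exp (-x ^ 2) / (x + erfS x)

noncomputable def erfI (x : ℝ) : ℝ := ∫ t in (0:ℝ)..x, Real.exp (-t ^ 2)

noncomputable def erfD (x : ℝ) : ℝ := erfH x + erfI x - Real.sqrt π / 2

lemma erf_cont : Continuous fun t : ℝ => Real.exp (-t ^ 2) :=
  Real.continuous_exp.comp ((continuous_pow 2).neg)

lemma erfS_pos (x : ℝ) (hx : 0 ≤ x) : 0 < erfS x := by
  apply Real.sqrt_pos.2
  positivity

lemma erfS_sq (x : ℝ) : erfS x ^ 2 = x ^ 2 + 4 / π := by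
  rw [erfS, Real.sq_sqrt]
  positivity

lemma erfD_hasDeriv (x : ℝ) (hx : 0 < x) :
    HasDerivAt erfD (Real.exp (-x ^ 2) * ((erfS x ^ 2 - x * erfS x - 1) /
      (erfS x * (x + erfS x)))) x := by
  have hs0 : 0 < erfS x := erfS_pos x hx.le
  have hxs : 0 < x + erfS x := by linarith
  have hse : (x ^ 2 + 4 / π) ≠ 0 := by positivity
  -- derivative of S
  have hS : HasDerivAt erfS (x / erfS x) x := by
    have h1 : HasDerivAt (fun y : ℝ => y ^ 2 + 4 / π) (2 * x) x := by
      simpa using ((hasDerivAt_pow 2 x).add_const (4 / π))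
    have := (Real.hasDerivAt_sqrt hse).comp x h1
    refine HasDerivAt.congr_deriv this ?_
    simp only [erfS] at hs0 ⊢
    field_simp
  -- derivative of exp(-x^2)
  have hE : HasDerivAt (fun y : ℝ => Real.exp (-y ^ 2)) (Real.exp (-x ^ 2) * (-(2 * x))) x := by
    have h1 : HasDerivAt (fun y : ℝ => -y ^ 2) (-(2 * x)) x := by
      exact (hasDerivAt_pow 2 x).neg.congr_deriv (by norm_num)
    exact (Real.hasDerivAt_exp _).comp x h1
  -- derivative of H
  have hP : HasDerivAt (fun y : ℝ => y + erfS y) (1 + x / erfS x) x :=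
    (hasDerivAt_id x).add hS
  have hInv : HasDerivAt (fun y : ℝ => (y + erfS y)⁻¹)
      (-(1 + x / erfS x) / (x + erfS x) ^ 2) x := hP.inv hxs.ne'
  have hH : HasDerivAt erfH
      (Real.exp (-x ^ 2) * (-(2 * x)) * (x + erfS x)⁻¹ +
        Real.exp (-x ^ 2) * (-(1 + x / erfS x) / (x + erfS x) ^ 2)) x := by
    have := hE.mul hInv
    exact this
  -- derivative of I
  have hI : HasDerivAt erfI (Real.exp (-x ^ 2)) x := by
    exact intervalIntegral.integral_hasDerivAt_right
      (erf_cont.intervalIntegrable _ _)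
      (erf_cont.stronglyMeasurableAtFilter _ _)
      erf_cont.continuousAt
  have hD := (hH.add hI).sub_const (Real.sqrt π / 2)
  refine HasDerivAt.congr_deriv hD ?_
  have hsne : erfS x ≠ 0 := hs0.ne'
  have hxsne : x + erfS x ≠ 0 := hxs.ne'
  field_simp
  ring

lemma erfD_deriv_nonpos (x : ℝ) (hx : 1 ≤ x) : deriv erfD x ≤ 0 := by
  have hx0 : (0:ℝ) < x := by linarith
  have hs0 : 0 < erfS x := erfS_pos x hx0.le
  have hxs : 0 < x + erfS x := by linarith
  rw [(erfD_hasDeriv x hx0).deriv]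
  have hsq := erfS_sq x
  have hpi1 : π > 3.141592 := pi_gt_d6
  have hpi2 : π < 3.1416 := pi_lt_d4
  have hc : (4:ℝ) / π < 2 := by
    rw [div_lt_iff₀ pi_pos]; nlinarith
  -- key: x^2 + 4/π - 1 ≤ x * erfS x
  have hkey : x ^ 2 + 4 / π - 1 ≤ x * erfS x := by
    have h1 : (x * erfS x) ^ 2 = x ^ 2 * (x ^ 2 + 4 / π) := by
      rw [mul_pow, hsq]
    have h2 : (x ^ 2 + 4 / π - 1) ^ 2 ≤ x ^ 2 * (x ^ 2 + 4 / π) := by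
      have hc1 : (1:ℝ) < 4 / π := by
        rw [lt_div_iff₀ pi_pos]; nlinarith
      have hq : (4 / π - 1) ^ 2 ≤ (2 - 4 / π) * x ^ 2 := by
        have hx2 : (1:ℝ) ≤ x ^ 2 := by nlinarith
        have : (4 / π - 1) ^ 2 ≤ 2 - 4 / π := by
          rw [div_sub' pi_pos.ne', div_pow, div_le_iff₀ (by positivity),
            sub_div' pi_pos.ne']
          rw [div_mul_eq_mul_div, le_div_iff₀ pi_pos]
          nlinarith
        nlinarith [this, hx2, sub_nonneg.2 hc.le]
      nlinarith
    have h3 : 0 ≤ x * erfS x := by positivity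
    nlinarith [h1, h2, h3, sq_nonneg (x * erfS x - (x ^ 2 + 4 / π - 1))]
  have hnum : erfS x ^ 2 - x * erfS x - 1 ≤ 0 := by
    rw [hsq]; linarith
  have := div_nonpos_of_nonpos_of_nonneg hnum (by positivity : (0:ℝ) ≤ erfS x * (x + erfS x))
  exact mul_nonpos_of_nonneg_of_nonpos (Real.exp_pos _).le this

lemma erfD_antitone : AntitoneOn erfD (Ici 1) := by
  apply antitoneOn_of_deriv_nonpos (convex_Ici 1)
  · intro y hy
    exact ((erfD_hasDeriv y (by simp at hy ⊢; linarith)).continuousAt).continuousWithinAt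
  · intro y hy
    rw [interior_Ici] at hy
    exact ((erfD_hasDeriv y (by simp at hy ⊢; linarith)).differentiableAt).differentiableWithinAt
  · intro y hy
    rw [interior_Ici] at hy
    exact erfD_deriv_nonpos y hy.le

lemma erfD_tendsto : Tendsto erfD atTop (nhds 0) := by
  have hI : Tendsto erfI atTop (nhds (Real.sqrt π / 2)) := by
    have hint : IntegrableOn (fun t : ℝ => Real.exp (-t ^ 2)) (Ioi 0) := by
      have := (integrable_exp_neg_mul_sq (by norm_num : (0:ℝ) < 1)).integrableOn (s := Ioi 0)
      simpa using this
    have := intervalIntegral_tendsto_integral_Ioi 0 hint tendsto_id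
    have hval : (∫ t in Ioi (0:ℝ), Real.exp (-t ^ 2)) = Real.sqrt π / 2 := by
      have := integral_gaussian_Ioi 1
      simpa using this
    rw [hval] at this
    exact this
  have hH : Tendsto erfH atTop (nhds 0) := by
    apply tendsto_of_tendsto_of_tendsto_of_le_of_le' tendsto_const_nhds
      (Real.tendsto_exp_neg_atTop_nhds_zero)
    · filter_upwards [eventually_ge_atTop (1:ℝ)] with y hy
      have := erfS_pos y (by linarith)
      exact div_nonneg (Real.exp_pos _).le (by linarith)
    · filter_upwards [eventually_ge_atTop (1:ℝ)] with y hy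
      have hs := erfS_pos y (by linarith)
      have h1 : Real.exp (-y ^ 2) ≤ Real.exp (-y) := by
        apply Real.exp_le_exp.2
        nlinarith
      have h2 : (1:ℝ) ≤ y + erfS y := by linarith
      calc erfH y ≤ Real.exp (-y ^ 2) / 1 :=
            div_le_div_of_nonneg_left (Real.exp_pos _).le one_pos h2 |>.trans_eq rfl
        _ = Real.exp (-y ^ 2) := div_one _
        _ ≤ Real.exp (-y) := h1
  have := (hH.add (hI.sub_const (Real.sqrt π / 2)))
  simpa [erfD, sub_self] using this.congr (fun y => by rw [erfD]; ring)

lemma erfD_nonneg (x : ℝ) (hx : 1 ≤ x) : 0 ≤ erfD x := by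
  apply le_of_tendsto erfD_tendsto
  filter_upwards [eventually_ge_atTop x] with y hy
  exact erfD_antitone hx (le_trans hx hy) hy

/-- For `x ≥ 1`, `erf(x) ≥ 1 - 2e^{-x²}/(√π x + √(πx² + 4)) ≤ 1 - C₀e^{-x²}`
with `C₀ = 2/(√π + √(π+4))`. -/
theorem stmt_15 (x : ℝ) (hx : 1 ≤ x) :
    1 - 2 * Real.exp (-x ^ 2) / (Real.sqrt π * x + Real.sqrt (π * x ^ 2 + 4))
        ≤ erf x ∧
    1 - (2 / (Real.sqrt π + Real.sqrt (π + 4))) * Real.exp (-x ^ 2)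
        ≤ 1 - 2 * Real.exp (-x ^ 2) / (Real.sqrt π * x + Real.sqrt (π * x ^ 2 + 4)) := by
  have hx0 : (0:ℝ) < x := by linarith
  have hsp : (0:ℝ) < Real.sqrt π := Real.sqrt_pos.2 pi_pos
  have hs0 : 0 < erfS x := erfS_pos x hx0.le
  have hsqrt : Real.sqrt (π * x ^ 2 + 4) = Real.sqrt π * erfS x := by
    rw [erfS, ← Real.sqrt_mul pi_pos.le]
    congr 1
    field_simp
  constructor
  · have hD := erfD_nonneg x hx
    rw [erfD] at hD
    have key : Real.sqrt π / 2 - erfH x ≤ erfI x := by linarith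
    have h2 : (2 / Real.sqrt π) * (Real.sqrt π / 2 - erfH x) ≤ (2 / Real.sqrt π) * erfI x :=
      mul_le_mul_of_nonneg_left key (by positivity)
    have heq : (2 / Real.sqrt π) * (Real.sqrt π / 2 - erfH x)
        = 1 - 2 * Real.exp (-x ^ 2) / (Real.sqrt π * x + Real.sqrt (π * x ^ 2 + 4)) := by
      rw [hsqrt, erfH]
      have hd : Real.sqrt π * x + Real.sqrt π * erfS x = Real.sqrt π * (x + erfS x) := by ring
      rw [hd]
      have hxs : (0:ℝ) < x + erfS x := by linarith
      field_simp
    rw [heq] at h2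
    exact h2.trans_eq rfl
  · have hs4 : (0:ℝ) < Real.sqrt (π + 4) := Real.sqrt_pos.2 (by positivity)
    have hd1 : (0:ℝ) < Real.sqrt π + Real.sqrt (π + 4) := by linarith
    have hmono : Real.sqrt π + Real.sqrt (π + 4) ≤ Real.sqrt π * x + Real.sqrt (π * x ^ 2 + 4) := by
      have h1 : Real.sqrt π ≤ Real.sqrt π * x := le_mul_of_one_le_right hsp.le hx
      have h2 : Real.sqrt (π + 4) ≤ Real.sqrt (π * x ^ 2 + 4) := by
        apply Real.sqrt_le_sqrt
        have h3 : (1:ℝ) ≤ x ^ 2 := by nlinarith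
        nlinarith [pi_pos]
      linarith
    have he : (0:ℝ) < Real.exp (-x ^ 2) := Real.exp_pos _
    have : 2 * Real.exp (-x ^ 2) / (Real.sqrt π * x + Real.sqrt (π * x ^ 2 + 4))
        ≤ 2 * Real.exp (-x ^ 2) / (Real.sqrt π + Real.sqrt (π + 4)) :=
      div_le_div_of_nonneg_left (by positivity) hd1 hmono
    have heq : 2 * Real.exp (-x ^ 2) / (Real.sqrt π + Real.sqrt (π + 4))
        = (2 / (Real.sqrt π + Real.sqrt (π + 4))) * Real.exp (-x ^ 2) := by ring
    linarith [this, heq ▸ this]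
end

section
/- Fix σ > 0 and 0 < q < 1, and define ε_{q,σ}(N) implicitly by q = [erf(ε_{q,σ}(N)/(σ√2))]^{N−1}. Then ε_{q,σ}(N) ≤ σ√(C₁ + 2 ln(N−1)) for all sufficiently large N, where C₁ = 2 ln C₀ − ln(1−q) and C₀ = 2/(√π + √(π+4)); in particular ε_{q,σ}(N) = O(√(ln N)). -/
open Real Filter MeasureTheory Set Topology

lemma gauss_cont : Continuous fun t : ℝ ↦ Real.exp (-t ^ 2) := by
  continuity

lemma gauss_integrable : Integrable fun t : ℝ ↦ Real.exp (-t ^ 2) := by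
  have := integrable_exp_neg_mul_sq (b := 1) one_pos
  simpa using this

lemma gauss_mul_integrable : Integrable fun t : ℝ ↦ t * Real.exp (-t ^ 2) := by
  have := integrable_mul_exp_neg_mul_sq (b := 1) one_pos
  simpa using this

lemma erf_strictMono : StrictMono erf := by
  intro a b hab
  have h1 : ∀ u v : ℝ, IntervalIntegrable (fun t ↦ Real.exp (-t ^ 2)) volume u v :=
    fun u v ↦ gauss_cont.intervalIntegrable u v
  have hadd := intervalIntegral.integral_add_adjacent_intervals (h1 0 a) (h1 a b)
  have hpos : 0 < ∫ t in a..b, Real.exp (-t ^ 2) :=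
    intervalIntegral.intervalIntegral_pos_of_pos (h1 a b) (fun t ↦ Real.exp_pos _) hab
  have hc : (0:ℝ) < 2 / Real.sqrt π := by
    have := Real.pi_pos; positivity
  have key : (∫ t in (0:ℝ)..a, Real.exp (-t ^ 2)) < ∫ t in (0:ℝ)..b, Real.exp (-t ^ 2) := by
    linarith
  exact mul_lt_mul_of_pos_left key hc

lemma gauss_total : ∫ t in Ioi (0:ℝ), Real.exp (-t ^ 2) = Real.sqrt π / 2 := by
  have := integral_gaussian_Ioi 1
  simpa using this

lemma gauss_tail_mul (x : ℝ) :
    ∫ t in Ioi x, t * Real.exp (-t ^ 2) = Real.exp (-x ^ 2) / 2 := by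
  have hderiv : ∀ t ∈ Ici x, HasDerivAt (fun t : ℝ ↦ -(Real.exp (-t ^ 2) / 2))
      (t * Real.exp (-t ^ 2)) t := by
    intro t _
    have h1 : HasDerivAt (fun t : ℝ ↦ -t ^ 2) (-(2 * t)) t := by
      simpa using (hasDerivAt_pow 2 t).fun_neg
    have h2 := (h1.exp.div_const 2).fun_neg
    exact h2.congr_deriv (by ring)
  have hint : IntegrableOn (fun t : ℝ ↦ t * Real.exp (-t ^ 2)) (Ioi x) :=
    gauss_mul_integrable.integrableOn
  have htend : Tendsto (fun t : ℝ ↦ -(Real.exp (-t ^ 2) / 2)) atTop (𝓝 0) := by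
    have h0 : Tendsto (fun t : ℝ ↦ -t ^ 2) atTop atBot :=
      tendsto_neg_atTop_atBot.comp (tendsto_pow_atTop two_ne_zero)
    have := ((tendsto_exp_atBot.comp h0).div_const 2).neg
    simpa using this
  have := integral_Ioi_of_hasDerivAt_of_tendsto' hderiv hint htend
  rw [this]; ring

lemma erf_tail {x : ℝ} (hx : 0 < x) :
    1 - erf x ≤ Real.exp (-x ^ 2) / (x * Real.sqrt π) := by
  have hπ : 0 < Real.sqrt π := Real.sqrt_pos.2 Real.pi_pos
  have hsplit : (∫ t in Ioi (0:ℝ), Real.exp (-t ^ 2)) =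
      (∫ t in Ioc (0:ℝ) x, Real.exp (-t ^ 2)) + ∫ t in Ioi x, Real.exp (-t ^ 2) := by
    rw [← setIntegral_union (Ioc_disjoint_Ioi le_rfl) measurableSet_Ioi
      gauss_integrable.integrableOn gauss_integrable.integrableOn,
      Ioc_union_Ioi_eq_Ioi hx.le]
  have hIoc : erf x = (2 / Real.sqrt π) * ∫ t in Ioc (0:ℝ) x, Real.exp (-t ^ 2) := by
    rw [erf, intervalIntegral.integral_of_le hx.le]
  have htail_le : (∫ t in Ioi x, Real.exp (-t ^ 2)) ≤ x⁻¹ * (Real.exp (-x ^ 2) / 2) := by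
    have hmono : (∫ t in Ioi x, Real.exp (-t ^ 2)) ≤
        ∫ t in Ioi x, x⁻¹ * (t * Real.exp (-t ^ 2)) := by
      apply setIntegral_mono_on gauss_integrable.integrableOn
        (gauss_mul_integrable.integrableOn.const_mul _) measurableSet_Ioi
      intro t ht
      have htx : x < t := ht
      have he := (Real.exp_pos (-t ^ 2)).le
      have h1 : (1:ℝ) ≤ x⁻¹ * t := by
        rw [← inv_mul_cancel₀ hx.ne']
        exact mul_le_mul_of_nonneg_left htx.le (inv_nonneg.2 hx.le)
      calc Real.exp (-t ^ 2) = 1 * Real.exp (-t ^ 2) := (one_mul _).symm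
        _ ≤ (x⁻¹ * t) * Real.exp (-t ^ 2) := mul_le_mul_of_nonneg_right h1 he
        _ = x⁻¹ * (t * Real.exp (-t ^ 2)) := by ring
    rw [integral_const_mul, gauss_tail_mul] at hmono
    exact hmono
  have hone : (1:ℝ) = (2 / Real.sqrt π) * (Real.sqrt π / 2) := by
    field_simp
  have hc : (0:ℝ) ≤ 2 / Real.sqrt π := by positivity
  have key : 1 - erf x = (2 / Real.sqrt π) * ∫ t in Ioi x, Real.exp (-t ^ 2) := by
    rw [hone, hIoc, ← mul_sub, ← gauss_total, hsplit]
    ring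
  rw [key]
  calc (2 / Real.sqrt π) * ∫ t in Ioi x, Real.exp (-t ^ 2)
      ≤ (2 / Real.sqrt π) * (x⁻¹ * (Real.exp (-x ^ 2) / 2)) :=
        mul_le_mul_of_nonneg_left htail_le hc
    _ = Real.exp (-x ^ 2) / (x * Real.sqrt π) := by
        field_simp

/-- If `ε(N)` is defined by `q = erf(ε(N)/(σ√2))^{N-1}`, then for large `N`,
`ε(N) ≤ σ√(C₁ + 2 ln(N-1))` with `C₁ = 2 ln C₀ - ln(1-q)`,
`C₀ = 2/(√π + √(π+4))`; in particular `ε(N) = O(√(ln N))`. -/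
theorem stmt_16 (σ q : ℝ) (hσ : 0 < σ) (hq0 : 0 < q) (hq1 : q < 1)
    (ε : ℕ → ℝ) (hε : ∀ N, 2 ≤ N → 0 < ε N ∧ erf (ε N / (σ * Real.sqrt 2)) ^ (N - 1) = q) :
    (∀ᶠ N : ℕ in atTop, ε N ≤
        σ * Real.sqrt ((2 * Real.log (2 / (Real.sqrt π + Real.sqrt (π + 4)))
          - Real.log (1 - q)) + 2 * Real.log ((N : ℝ) - 1))) ∧
      ∃ C : ℝ, 0 < C ∧ ∀ᶠ N : ℕ in atTop, ε N ≤ C * Real.sqrt (Real.log N) := by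
  have hπ : 0 < Real.sqrt π := Real.sqrt_pos.2 Real.pi_pos
  set c1 : ℝ := 2 * Real.log (2 / (Real.sqrt π + Real.sqrt (π + 4))) - Real.log (1 - q)
    with hc1
  set K : ℝ := Real.exp (-(c1 / 2)) / Real.sqrt π with hK
  have hKpos : 0 < K := by positivity
  have hq' : 0 < 1 - q := by linarith
  set R : ℝ := max 1 (K / (1 - q)) with hR
  have hR1 : (1:ℝ) ≤ R := le_max_left _ _
  have hRq : K / (1 - q) ≤ R := le_max_right _ _
  clear_value R
  clear_value K
  clear_value c1
  have hlog : Tendsto (fun N : ℕ ↦ Real.log ((N:ℝ) - 1)) atTop atTop := by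
    apply Real.tendsto_log_atTop.comp
    exact tendsto_atTop_add_const_right atTop (-1) tendsto_natCast_atTop_atTop
  have hmain : ∀ᶠ N : ℕ in atTop, ε N ≤ σ * Real.sqrt (c1 + 2 * Real.log ((N:ℝ) - 1)) := by
    filter_upwards [eventually_ge_atTop 2, hlog.eventually_ge_atTop (R ^ 2 - c1 / 2)]
      with N hN2 hNlog
    obtain ⟨hεpos, hεq⟩ := hε N hN2
    set L : ℝ := Real.log ((N:ℝ) - 1) with hL
    clear_value L
    have hN1 : (1:ℝ) ≤ (N:ℝ) - 1 := by
      have : (2:ℝ) ≤ (N:ℝ) := by exact_mod_cast hN2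
      linarith
    have hNpos : (0:ℝ) < (N:ℝ) - 1 := by linarith
    have hRL : R ^ 2 ≤ c1 / 2 + L := by linarith
    have hR2 : (1:ℝ) ≤ R ^ 2 := by nlinarith
    have hA : 0 ≤ c1 + 2 * L := by linarith [hRL, hR2]
    set u : ℝ := Real.sqrt ((c1 + 2 * L) / 2) with hu
    have hu2 : u ^ 2 = c1 / 2 + L := by
      rw [hu, Real.sq_sqrt (by linarith)]; ring
    have huR : R ≤ u := by
      have := Real.sqrt_le_sqrt (show R ^ 2 ≤ (c1 + 2 * L) / 2 by linarith)
      rwa [Real.sqrt_sq (by linarith)] at this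
    have hupos : 0 < u := lt_of_lt_of_le (by linarith) huR
    clear_value u
    have hexp : Real.exp (-u ^ 2) = Real.exp (-(c1 / 2)) / ((N:ℝ) - 1) := by
      rw [hu2, neg_add, Real.exp_add,
        show Real.exp (-L) = ((N:ℝ) - 1)⁻¹ by rw [hL, Real.exp_neg, Real.exp_log hNpos]]
      exact (div_eq_mul_inv _ _).symm
    have htail := erf_tail hupos
    set δ : ℝ := K / (((N:ℝ) - 1) * u) with hδ
    have hδeq : Real.exp (-u ^ 2) / (u * Real.sqrt π) = δ := by
      rw [hexp, hδ, hK]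
      field_simp
    have herf_lb : 1 - δ ≤ erf u := by rw [hδeq] at htail; linarith
    have hδKu : ((N:ℝ) - 1) * δ = K / u := by
      rw [hδ]; field_simp
    have hKu_le : K / u ≤ 1 - q := by
      rw [div_le_iff₀ hupos]
      have h1 : K / (1 - q) ≤ u := le_trans hRq huR
      rw [div_le_iff₀ hq'] at h1
      linarith
    have hδ_le : δ ≤ K / u := by
      rw [hδ]
      apply div_le_div_of_nonneg_left hKpos.le hupos
      nlinarith
    have hδ1 : δ ≤ 1 - q := le_trans hδ_le hKu_le
    -- Bernoulli
    have hbern : 1 + ((N - 1 : ℕ) : ℝ) * (-δ) ≤ (1 + -δ) ^ (N - 1) :=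
      one_add_mul_le_pow (by linarith) (N - 1)
    have hcast : ((N - 1 : ℕ) : ℝ) = (N:ℝ) - 1 := by
      have : 1 ≤ N := by omega
      push_cast [Nat.cast_sub this]
      ring
    have hq_le : q ≤ (1 - δ) ^ (N - 1) := by
      have : 1 + ((N:ℝ) - 1) * (-δ) ≤ (1 - δ) ^ (N - 1) := by
        rw [← hcast, sub_eq_add_neg]
        exact hbern
      have h2 : 1 + ((N:ℝ) - 1) * (-δ) = 1 - ((N:ℝ) - 1) * δ := by ring
      rw [h2, hδKu] at this
      linarith
    have hδ0 : 0 ≤ 1 - δ := by linarith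
    have herfpow : q ≤ erf u ^ (N - 1) :=
      le_trans hq_le (pow_le_pow_left₀ hδ0 herf_lb _)
    -- compare with ε
    have herfu0 : 0 ≤ erf u := by linarith
    have hle : erf (ε N / (σ * Real.sqrt 2)) ≤ erf u := by
      apply le_of_pow_le_pow_left₀ (n := N - 1) (by omega) herfu0
      rw [hεq]
      exact herfpow
    have harg : ε N / (σ * Real.sqrt 2) ≤ u := erf_strictMono.le_iff_le.mp hle
    have hσ2 : 0 < σ * Real.sqrt 2 := by positivity
    rw [div_le_iff₀ hσ2] at harg
    calc ε N ≤ u * (σ * Real.sqrt 2) := harg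
      _ = σ * (Real.sqrt 2 * Real.sqrt ((c1 + 2 * L) / 2)) := by rw [hu]; ring
      _ = σ * Real.sqrt (c1 + 2 * L) := by
          rw [← Real.sqrt_mul (by norm_num : (0:ℝ) ≤ 2)]
          congr 1
          rw [mul_div_cancel₀]
          norm_num
  refine ⟨hmain, 2 * σ, by positivity, ?_⟩
  have hlogN : Tendsto (fun N : ℕ ↦ Real.log (N:ℝ)) atTop atTop :=
    Real.tendsto_log_atTop.comp tendsto_natCast_atTop_atTop
  filter_upwards [hmain, eventually_ge_atTop 2, hlogN.eventually_ge_atTop (c1 / 2),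
    hlogN.eventually_ge_atTop 0] with N h1 hN2 hc1N hlog0
  have hN1 : (1:ℝ) ≤ (N:ℝ) - 1 := by
    have : (2:ℝ) ≤ (N:ℝ) := by exact_mod_cast hN2
    linarith
  have hloglog : Real.log ((N:ℝ) - 1) ≤ Real.log (N:ℝ) :=
    Real.log_le_log (by linarith) (by linarith)
  have hc1N' : c1 / 2 ≤ Real.log (N:ℝ) := hc1N
  have hb : c1 + 2 * Real.log ((N:ℝ) - 1) ≤ 4 * Real.log (N:ℝ) := by linarith [hc1N', hloglog]
  calc ε N ≤ σ * Real.sqrt (c1 + 2 * Real.log ((N:ℝ) - 1)) := h1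
    _ ≤ σ * Real.sqrt (4 * Real.log (N:ℝ)) := by
        apply mul_le_mul_of_nonneg_left (Real.sqrt_le_sqrt hb) hσ.le
    _ = 2 * σ * Real.sqrt (Real.log (N:ℝ)) := by
        rw [show (4:ℝ) * Real.log (N:ℝ) = 2 ^ 2 * Real.log (N:ℝ) by norm_num,
          Real.sqrt_mul (by positivity), Real.sqrt_sq (by norm_num : (0:ℝ) ≤ 2)]
        ring
end
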